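/- For all α₁⁺, α₂⁺, λ⁺, α₁⁻, α₂⁻, λ⁻ > 0, the convolution of the bilateral Gamma distributions BΓ(α₁⁺,λ⁺;α₁⁻,λ⁻) and BΓ(α₂⁺,λ⁺;α₂⁻,λ⁻) equals the bilateral Gamma distribution BΓ(α₁⁺ + α₂⁺, λ⁺; α₁⁻ + α₂⁻, λ⁻). -/

import Mathlib

open MeasureTheory Filter Set Topology

/-- The Gamma(α,λ) density: `λ^α t^(α-1) e^(-λt) / Γ(α)` for `t > 0`, and `0` for `t ≤ 0`. -/
noncomputable def gammaDensity (a l t : ℝ) : ℝ :=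
  if 0 < t then l ^ a * t ^ (a - 1) * Real.exp (-l * t) / Real.Gamma a else 0

/-- The Gamma(α,λ) distribution on ℝ. -/
noncomputable def gammaMeasure' (a l : ℝ) : Measure ℝ :=
  volume.withDensity fun t => ENNReal.ofReal (gammaDensity a l t)

/-- The bilateral Gamma distribution BΓ(α⁺,λ⁺;α⁻,λ⁻): the pushforward of
`Gamma(α⁺,λ⁺) ⊗ Gamma(α⁻,λ⁻)` under `(x, y) ↦ x - y`. -/
noncomputable def bilateralGammaMeasure (ap lp am lm : ℝ) : Measure ℝ :=
  ((gammaMeasure' ap lp).prod (gammaMeasure' am lm)).map fun p => p.1 - p.2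


open scoped ENNReal
open intervalIntegral Measure


lemma betaIntegrand_intervalIntegrable {a b z : ℝ} (ha : 0 < a) (hb : 0 < b) (hz : 0 < z) :
    IntervalIntegrable (fun t : ℝ => t ^ (a - 1) * (z - t) ^ (b - 1)) volume 0 z := by
  have h1 : IntervalIntegrable (fun t : ℝ => t ^ (a - 1) * (z - t) ^ (b - 1)) volume 0 (z/2) := by
    refine (intervalIntegral.intervalIntegrable_rpow' (r := a - 1) (by linarith)
      (a := 0) (b := z/2)).mul_continuousOn ?_
    refine ContinuousOn.rpow_const (continuous_const.sub continuous_id).continuousOn ?_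
    intro t ht
    rw [uIcc_of_le (by linarith)] at ht
    left; intro h; nlinarith [ht.1, ht.2]
  have h2 : IntervalIntegrable (fun t : ℝ => t ^ (a - 1) * (z - t) ^ (b - 1)) volume (z/2) z := by
    have base : IntervalIntegrable (fun t : ℝ => t ^ (b - 1)) volume 0 (z/2) :=
      intervalIntegral.intervalIntegrable_rpow' (by linarith)
    have refl : IntervalIntegrable (fun t : ℝ => (z - t) ^ (b - 1)) volume (z - z/2) (z - 0) :=
      (base.comp_sub_left z).symm
    rw [show z - z/2 = z/2 by ring, sub_zero] at refl
    refine refl.continuousOn_mul ?_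
    refine ContinuousOn.rpow_const continuousOn_id ?_
    intro t ht
    rw [uIcc_of_le (by linarith)] at ht
    left; intro h; nlinarith [ht.1]
  exact h1.trans h2

lemma betaIntegral_real {a b z : ℝ} (ha : 0 < a) (hb : 0 < b) (hz : 0 < z) :
    ∫ t in (0:ℝ)..z, t ^ (a - 1) * (z - t) ^ (b - 1)
      = z ^ (a + b - 1) * (Real.Gamma a * Real.Gamma b / Real.Gamma (a + b)) := by
  have key := Complex.betaIntegral_scaled (a : ℂ) (b : ℂ) hz
  have hβ : Complex.betaIntegral a b = Real.Gamma a * Real.Gamma b / Real.Gamma (a + b) := by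
    have h := Complex.Gamma_mul_Gamma_eq_betaIntegral
      (s := (a:ℂ)) (t := (b:ℂ)) (by simpa using ha) (by simpa using hb)
    have hΓ : Complex.Gamma ((a:ℂ) + b) ≠ 0 := by
      rw [show ((a:ℂ) + b) = ((a + b : ℝ) : ℂ) by push_cast; ring, Complex.Gamma_ofReal]
      exact_mod_cast (Real.Gamma_pos_of_pos (by linarith)).ne'
    rw [show ((a:ℂ) + b) = ((a + b : ℝ) : ℂ) by push_cast; ring, Complex.Gamma_ofReal,
      Complex.Gamma_ofReal, Complex.Gamma_ofReal] at h
    rw [eq_div_iff (by exact_mod_cast (Real.Gamma_pos_of_pos (by linarith : (0:ℝ) < a + b)).ne')]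
    linear_combination -h
  have hcast : ∫ t in (0:ℝ)..z, ((t : ℂ) ^ ((a:ℂ) - 1) * ((z : ℂ) - t) ^ ((b:ℂ) - 1))
      = ((∫ t in (0:ℝ)..z, t ^ (a - 1) * (z - t) ^ (b - 1) : ℝ) : ℂ) := by
    rw [← intervalIntegral.integral_ofReal]
    refine intervalIntegral.integral_congr_ae ?_
    have : ∀ᵐ t : ℝ, t ∈ Set.uIoc (0:ℝ) z → ((t : ℂ) ^ ((a:ℂ) - 1) * ((z : ℂ) - t) ^ ((b:ℂ) - 1))
        = ((t ^ (a - 1) * (z - t) ^ (b - 1) : ℝ) : ℂ) := by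
      filter_upwards with t ht
      rw [uIoc_of_le hz.le] at ht
      rw [Complex.ofReal_mul, Complex.ofReal_cpow ht.1.le, Complex.ofReal_cpow (by linarith [ht.2] : (0:ℝ) ≤ z - t)]
      push_cast; ring
    exact this
  rw [hcast, hβ] at key
  have hzc : ((z : ℂ)) ^ ((a:ℂ) + b - 1) = ((z ^ (a + b - 1) : ℝ) : ℂ) := by
    rw [Complex.ofReal_cpow hz.le]; push_cast; ring_nf
  rw [hzc] at key
  exact_mod_cast key


lemma conv_withDensity {f g : ℝ → ℝ≥0∞} (hf : Measurable f) (hg : Measurable g) :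
    (((volume.withDensity f).prod (volume.withDensity g)).map fun p : ℝ × ℝ => p.1 + p.2)
      = volume.withDensity fun z => ∫⁻ t, f t * g (z - t) := by
  ext s hs
  rw [Measure.map_apply (by fun_prop) hs, withDensity_apply _ hs]
  have hind : MeasurableSet ((fun p : ℝ × ℝ => p.1 + p.2) ⁻¹' s) := hs.preimage (by fun_prop)
  have hindm : Measurable (s.indicator (1 : ℝ → ℝ≥0∞)) := measurable_one.indicator hs
  rw [← lintegral_indicator_one hind, lintegral_prod _ (by
    exact ((measurable_one.indicator hind).comp measurable_id).aemeasurable)]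
  have step1 : ∀ x : ℝ, (∫⁻ y, ((fun p : ℝ × ℝ => p.1 + p.2) ⁻¹' s).indicator 1 (x, y)
        ∂(volume.withDensity g))
      = ∫⁻ z, g (z - x) * s.indicator 1 z := by
    intro x
    rw [lintegral_withDensity_eq_lintegral_mul _ hg (by
      exact (measurable_one.indicator hind).comp (measurable_const.prodMk measurable_id))]
    simp only [Pi.mul_apply]
    rw [← lintegral_add_left_eq_self (fun z => g (z - x) * s.indicator 1 z) x]
    refine lintegral_congr fun y => ?_
    simp only [add_sub_cancel_left]
    by_cases h : x + y ∈ s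
    · rw [Set.indicator_of_mem h, Set.indicator_of_mem (by simpa using h)]; rfl
    · rw [Set.indicator_of_notMem h, Set.indicator_of_notMem (by simpa using h)]
  simp_rw [step1]
  rw [lintegral_withDensity_eq_lintegral_mul _ hf (by
    exact Measurable.lintegral_prod_right (f := fun x z => g (z - x) * s.indicator 1 z)
      ((hg.comp (measurable_snd.sub measurable_fst)).mul (hindm.comp measurable_snd)))]
  simp only [Pi.mul_apply]
  have pull : ∀ a : ℝ, f a * ∫⁻ z, g (z - a) * s.indicator 1 z
      = ∫⁻ z, f a * (g (z - a) * s.indicator 1 z) := fun a =>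
    (lintegral_const_mul _ ((hg.comp (measurable_id.sub measurable_const)).mul hindm)).symm
  simp_rw [pull]
  rw [lintegral_lintegral_swap (by
    exact (((hf.comp measurable_fst).mul ((hg.comp (measurable_snd.sub measurable_fst)).mul
      (hindm.comp measurable_snd)))).aemeasurable)]
  rw [← lintegral_indicator hs]
  congr 1
  ext z
  by_cases hz : z ∈ s
  · simp [Set.indicator_of_mem hz]
  · simp [Set.indicator_of_notMem hz]

lemma gammaDensity_of_nonpos {a l t : ℝ} (ht : t ≤ 0) : gammaDensity a l t = 0 := by
  rw [gammaDensity, if_neg (not_lt.mpr ht)]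

lemma gammaDensity_conv {a b l : ℝ} (ha : 0 < a) (hb : 0 < b) (hl : 0 < l) (z : ℝ) :
    ∫⁻ t, ENNReal.ofReal (gammaDensity a l t) * ENNReal.ofReal (gammaDensity b l (z - t))
      = ENNReal.ofReal (gammaDensity (a + b) l z) := by
  by_cases hz : 0 < z
  swap
  · have h0 : ∀ t : ℝ, ENNReal.ofReal (gammaDensity a l t)
        * ENNReal.ofReal (gammaDensity b l (z - t)) = 0 := by
      intro t
      rcases le_or_gt t 0 with h | h
      · rw [gammaDensity_of_nonpos h]; simp
      · rw [gammaDensity_of_nonpos (t := z - t) (by push_neg at hz; linarith)]; simp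
    simp_rw [h0]
    rw [lintegral_zero, gammaDensity_of_nonpos (not_lt.mp hz), ENNReal.ofReal_zero]
  -- main case 0 < z
  set C : ℝ := l ^ a * l ^ b * Real.exp (-l * z) / (Real.Gamma a * Real.Gamma b) with hC
  have hΓa := Real.Gamma_pos_of_pos ha
  have hΓb := Real.Gamma_pos_of_pos hb
  have hΓab := Real.Gamma_pos_of_pos (by linarith : 0 < a + b)
  have hsupp : ∀ t : ℝ, ENNReal.ofReal (gammaDensity a l t)
      * ENNReal.ofReal (gammaDensity b l (z - t))
      = (Ioo (0:ℝ) z).indicator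
          (fun t => ENNReal.ofReal (C * (t ^ (a - 1) * (z - t) ^ (b - 1)))) t := by
    intro t
    by_cases ht : t ∈ Ioo (0:ℝ) z
    · rw [Set.indicator_of_mem ht]
      rw [gammaDensity, gammaDensity, if_pos ht.1, if_pos (by simpa using ht.2 : 0 < z - t)]
      rw [← ENNReal.ofReal_mul (by have h1 : (0:ℝ) < t := ht.1; positivity)]
      congr 1
      have he : Real.exp (-(l * t)) * Real.exp (-(l * (z - t))) = Real.exp (-(l * z)) := by
        rw [← Real.exp_add]; ring_nf
      rw [hC]
      simp only [neg_mul]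
      field_simp
      linear_combination (t ^ (a - 1) * (z - t) ^ (b - 1)) * he
    · rw [Set.indicator_of_notMem ht]
      simp only [mem_Ioo, not_and, not_lt] at ht
      rcases le_or_gt t 0 with h | h
      · rw [gammaDensity_of_nonpos h]; simp
      · rw [gammaDensity_of_nonpos (t := z - t) (by linarith [ht h])]; simp
  simp_rw [hsupp]
  rw [lintegral_indicator measurableSet_Ioo]
  have hInt : IntegrableOn (fun t : ℝ => C * (t ^ (a - 1) * (z - t) ^ (b - 1))) (Ioo 0 z) := by
    exact ((betaIntegrand_intervalIntegrable ha hb hz).const_mul C).1.mono_set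
      Ioo_subset_Ioc_self
  rw [← ofReal_integral_eq_lintegral_ofReal hInt (by
    filter_upwards [ae_restrict_mem measurableSet_Ioo] with t ht
    have h1 : (0:ℝ) < t := ht.1
    have h2 : (0:ℝ) < z - t := by linarith [ht.2]
    positivity)]
  congr 1
  rw [← integral_Ioc_eq_integral_Ioo, ← intervalIntegral.integral_of_le hz.le,
    intervalIntegral.integral_const_mul, betaIntegral_real ha hb hz]
  rw [gammaDensity, if_pos hz, hC, Real.rpow_add hl]
  field_simp

lemma measurable_gammaDensity (a l : ℝ) : Measurable (gammaDensity a l) := by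
  unfold gammaDensity
  exact Measurable.ite measurableSet_Ioi (by fun_prop) measurable_const

instance gammaMeasure'_sfinite (a l : ℝ) : SFinite (gammaMeasure' a l) := by
  unfold gammaMeasure'; infer_instance

instance bilateralGammaMeasure_sfinite (ap lp am lm : ℝ) :
    SFinite (bilateralGammaMeasure ap lp am lm) := by
  unfold bilateralGammaMeasure; infer_instance

lemma gammaMeasure'_conv {a b l : ℝ} (ha : 0 < a) (hb : 0 < b) (hl : 0 < l) :
    Measure.conv (gammaMeasure' a l) (gammaMeasure' b l) = gammaMeasure' (a + b) l := by
  show (((gammaMeasure' a l)).prod (gammaMeasure' b l)).map (fun p : ℝ × ℝ => p.1 + p.2) = _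
  rw [gammaMeasure', gammaMeasure',
    conv_withDensity ((measurable_gammaDensity a l).ennreal_ofReal)
      ((measurable_gammaDensity b l).ennreal_ofReal)]
  unfold gammaMeasure'
  congr 1
  funext z
  exact gammaDensity_conv ha hb hl z

lemma conv_assoc (μ ν ρ : Measure ℝ) [SFinite μ] [SFinite ν] [SFinite ρ] :
    Measure.conv (Measure.conv μ ν) ρ = Measure.conv μ (Measure.conv ν ρ) := by
  show ((((μ.prod ν).map fun p : ℝ × ℝ => p.1 + p.2)).prod ρ).map (fun p : ℝ × ℝ => p.1 + p.2)
    = (μ.prod ((ν.prod ρ).map fun p : ℝ × ℝ => p.1 + p.2)).map (fun p : ℝ × ℝ => p.1 + p.2)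
  have h1 : (((μ.prod ν).map fun p : ℝ × ℝ => p.1 + p.2)).prod ρ
      = ((μ.prod ν).prod ρ).map (Prod.map (fun p : ℝ × ℝ => p.1 + p.2) id) := by
    nth_rewrite 1 [← Measure.map_id (μ := ρ)]
    exact Measure.map_prod_map (f := fun p : ℝ × ℝ => p.1 + p.2) (g := (id : ℝ → ℝ))
      (μ.prod ν) ρ (by fun_prop) measurable_id
  have h2 : μ.prod ((ν.prod ρ).map fun p : ℝ × ℝ => p.1 + p.2)
      = (μ.prod (ν.prod ρ)).map (Prod.map id (fun p : ℝ × ℝ => p.1 + p.2)) := by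
    rw [← Measure.map_id (μ := μ)]
    nth_rewrite 2 [Measure.map_id (μ := μ)]
    exact Measure.map_prod_map (f := (id : ℝ → ℝ)) (g := fun p : ℝ × ℝ => p.1 + p.2)
      μ (ν.prod ρ) measurable_id (by fun_prop)
  rw [h1, h2, ← Measure.prodAssoc_prod, Measure.map_map (by fun_prop) (by fun_prop),
    Measure.map_map (by fun_prop) (by fun_prop),
    Measure.map_map (by fun_prop) (MeasurableEquiv.prodAssoc.measurable)]
  congr 1
  funext p
  show (p.1.1 + p.1.2) + p.2 = p.1.1 + (p.1.2 + p.2)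
  ring

lemma map_neg_conv (μ ν : Measure ℝ) [SFinite μ] [SFinite ν] :
    Measure.conv (μ.map Neg.neg) (ν.map Neg.neg) = (Measure.conv μ ν).map Neg.neg := by
  show ((μ.map Neg.neg).prod (ν.map Neg.neg)).map (fun p : ℝ × ℝ => p.1 + p.2)
    = ((μ.prod ν).map fun p : ℝ × ℝ => p.1 + p.2).map Neg.neg
  rw [Measure.map_prod_map (f := (Neg.neg : ℝ → ℝ)) (g := (Neg.neg : ℝ → ℝ)) μ ν
      (by fun_prop) (by fun_prop),
    Measure.map_map (by fun_prop) (by fun_prop), Measure.map_map (by fun_prop) (by fun_prop)]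
  congr 1
  funext p
  show -p.1 + -p.2 = -(p.1 + p.2)
  ring

lemma sub_map_eq_conv (μ ν : Measure ℝ) [SFinite μ] [SFinite ν] :
    ((μ.prod ν).map fun p : ℝ × ℝ => p.1 - p.2)
      = Measure.conv μ (ν.map Neg.neg) := by
  have h : μ.prod (ν.map Neg.neg) = (μ.prod ν).map (Prod.map id (Neg.neg : ℝ → ℝ)) := by
    nth_rewrite 1 [← Measure.map_id (μ := μ)]
    exact Measure.map_prod_map (f := (id : ℝ → ℝ)) (g := (Neg.neg : ℝ → ℝ)) μ ν
      measurable_id (by fun_prop)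
  show _ = (μ.prod (ν.map Neg.neg)).map fun p : ℝ × ℝ => p.1 + p.2
  rw [h, Measure.map_map (by fun_prop) (by fun_prop)]
  congr 1

lemma conv_conv_conv_comm (A B C D : Measure ℝ)
    [SFinite A] [SFinite B] [SFinite C] [SFinite D] :
    Measure.conv (Measure.conv A B) (Measure.conv C D)
      = Measure.conv (Measure.conv A C) (Measure.conv B D) := by
  rw [_root_.conv_assoc A B (Measure.conv C D), ← _root_.conv_assoc B C D, Measure.conv_comm B C,
    _root_.conv_assoc C B D, ← _root_.conv_assoc A C (Measure.conv B D)]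

/-- The convolution of two bilateral Gamma distributions with the same scale parameters
`λ⁺, λ⁻` is again bilateral Gamma, with the shape parameters added. -/
theorem bilateralGamma_conv (ap1 ap2 lp am1 am2 lm : ℝ)
    (hap1 : 0 < ap1) (hap2 : 0 < ap2) (hlp : 0 < lp)
    (ham1 : 0 < am1) (ham2 : 0 < am2) (hlm : 0 < lm) :
    (((bilateralGammaMeasure ap1 lp am1 lm).prod
        (bilateralGammaMeasure ap2 lp am2 lm)).map fun p => p.1 + p.2)
      = bilateralGammaMeasure (ap1 + ap2) lp (am1 + am2) lm := by
  show Measure.conv (bilateralGammaMeasure ap1 lp am1 lm) (bilateralGammaMeasure ap2 lp am2 lm) = _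
  rw [bilateralGammaMeasure, bilateralGammaMeasure, bilateralGammaMeasure,
    sub_map_eq_conv, sub_map_eq_conv, sub_map_eq_conv,
    conv_conv_conv_comm, gammaMeasure'_conv hap1 hap2 hlp, map_neg_conv,
    gammaMeasure'_conv ham1 ham2 hlm]
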